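/- arXiv:2407.16096 — 3 statements merged into one kernel-verified Lean document; each statement's English description precedes it below -/
import Mathlib

section
/- A twice-differentiable curve q : ℝ → ℝ^N satisfies the equations of motion M q̈(t) + α C q̇(t) + K q(t) + k_n max(wᵀq(t) − δ, 0) w = f cos(Ω t) for all t if and only if the transformed curve q̃ := V q − δ e₁ satisfies the transformed equations of motion M̃ q̃̈(t) + α C̃ q̃̇(t) + K̃ q̃(t) + k_n max(e₁ᵀ q̃(t), 0) e₁ = f̃ δ + f̃_t cos(Ω t) for all t. -/
/-!
`V` is upper triangular with diagonal `(w₁, 1, …, 1)`, hence invertible, and it satisfies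
`(V q)₁ = wᵀ q` and `Vᵀ e₁ = w`, i.e. `V⁻ᵀ w = e₁`. So, writing `q = V⁻¹ (q̃ + δ e₁)`, the transformed
equation at each time is the original one with `V⁻ᵀ` applied to both sides and `δ K̃ e₁` subtracted,
and `V⁻ᵀ` is injective.
-/

open Matrix

noncomputable section

/-- The coordinate-transformation matrix `V = [[w₁, w̄ᵀ],[0, I]]`. -/
def transMatrix {N : ℕ} (w : Fin (N + 1) → ℝ) : Matrix (Fin (N + 1)) (Fin (N + 1)) ℝ :=
  Matrix.of fun i j => if i = 0 then w j else if i = j then 1 else 0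

/-- The first standard basis vector `e₁` of `ℝ^N`. -/
def e₁ {N : ℕ} : Fin (N + 1) → ℝ := Pi.single 0 1

/-- Congruence transformation `V⁻ᵀ M V⁻¹` of a matrix `M` by `V = transMatrix w`. -/
def congrT {N : ℕ} (w : Fin (N + 1) → ℝ) (M : Matrix (Fin (N + 1)) (Fin (N + 1)) ℝ) :
    Matrix (Fin (N + 1)) (Fin (N + 1)) ℝ :=
  ((transMatrix w)⁻¹)ᵀ * M * (transMatrix w)⁻¹

/-- The constant transformed force `f̃ = −V⁻ᵀ K V⁻¹ e₁`. -/
def ftilde {N : ℕ} (w : Fin (N + 1) → ℝ) (K : Matrix (Fin (N + 1)) (Fin (N + 1)) ℝ) :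
    Fin (N + 1) → ℝ :=
  -((congrT w K).mulVec e₁)

/-- The transformed external forcing vector `f̃_t = V⁻ᵀ f`. -/
def fttilde {N : ℕ} (w : Fin (N + 1) → ℝ) (f : Fin (N + 1) → ℝ) : Fin (N + 1) → ℝ :=
  (((transMatrix w)⁻¹)ᵀ).mulVec f

section TransMatrix

variable {N : ℕ} (w : Fin (N + 1) → ℝ)

theorem transMatrix_isUpperTriangular : (transMatrix w).IsUpperTriangular := by
  intro i j hji
  have hi : i ≠ 0 := Fin.pos_iff_ne_zero.mp (lt_of_le_of_lt (Fin.zero_le j) hji)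
  simp only [transMatrix, of_apply, if_neg hi]
  exact if_neg hji.ne'

theorem det_transMatrix : (transMatrix w).det = w 0 := by
  rw [det_of_isUpperTriangular (transMatrix_isUpperTriangular w), Fin.prod_univ_succ]
  simp [transMatrix, Fin.succ_ne_zero]

theorem transMatrix_mulVec_apply_zero (x : Fin (N + 1) → ℝ) :
    (transMatrix w *ᵥ x) 0 = w ⬝ᵥ x := by
  simp [mulVec, dotProduct, transMatrix]

theorem transpose_transMatrix_mulVec_e₁ : (transMatrix w)ᵀ *ᵥ e₁ = w := by
  ext j
  simp [mulVec, dotProduct, e₁, Pi.single_apply, transMatrix]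

variable {w} (hw : w 0 ≠ 0)
include hw

theorem isUnit_det_transMatrix : IsUnit (transMatrix w).det := by
  simpa [det_transMatrix] using hw

theorem inv_transpose_transMatrix_mulVec : ((transMatrix w)⁻¹)ᵀ *ᵥ w = e₁ :=
  calc ((transMatrix w)⁻¹)ᵀ *ᵥ w = ((transMatrix w)⁻¹)ᵀ *ᵥ ((transMatrix w)ᵀ *ᵥ e₁) := by
        rw [transpose_transMatrix_mulVec_e₁]
    _ = e₁ := by
        rw [mulVec_mulVec, ← transpose_mul, mul_nonsing_inv _ (isUnit_det_transMatrix hw),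
          transpose_one, one_mulVec]

theorem congrT_mulVec_transMatrix_mulVec (B : Matrix (Fin (N + 1)) (Fin (N + 1)) ℝ)
    (x : Fin (N + 1) → ℝ) :
    congrT w B *ᵥ (transMatrix w *ᵥ x) = ((transMatrix w)⁻¹)ᵀ *ᵥ (B *ᵥ x) := by
  rw [congrT, mulVec_mulVec, mul_assoc _ (transMatrix w)⁻¹,
    nonsing_inv_mul _ (isUnit_det_transMatrix hw), mul_one, ← mulVec_mulVec]

theorem injective_inv_transpose_transMatrix_mulVec :
    Function.Injective (((transMatrix w)⁻¹)ᵀ *ᵥ ·) :=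
  mulVec_injective_iff_isUnit.mpr <| (isUnit_iff_isUnit_det _).mpr <|
    isUnit_det_transpose _ (isUnit_nonsing_inv_det _ (isUnit_det_transMatrix hw))

end TransMatrix

theorem eom_apply_iff_transformed {N : ℕ} {w : Fin (N + 1) → ℝ} (hw : w 0 ≠ 0)
    (M C K : Matrix (Fin (N + 1)) (Fin (N + 1)) ℝ) (f x v a : Fin (N + 1) → ℝ)
    (α kn δ c : ℝ) :
    M *ᵥ a + α • C *ᵥ v + K *ᵥ x + (kn * max (w ⬝ᵥ x - δ) 0) • w = c • f ↔
      congrT w M *ᵥ (transMatrix w *ᵥ a) + α • congrT w C *ᵥ (transMatrix w *ᵥ v)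
        + congrT w K *ᵥ (transMatrix w *ᵥ x - δ • e₁)
        + (kn * max ((transMatrix w *ᵥ x - δ • e₁ : Fin (N + 1) → ℝ) 0) 0) • e₁
        = δ • ftilde w K + c • fttilde w f := by
  have he₁ : (e₁ : Fin (N + 1) → ℝ) 0 = 1 := Pi.single_eq_same 0 1
  have hlhs : congrT w M *ᵥ (transMatrix w *ᵥ a) + α • congrT w C *ᵥ (transMatrix w *ᵥ v)
      + congrT w K *ᵥ (transMatrix w *ᵥ x - δ • e₁)
      + (kn * max ((transMatrix w *ᵥ x - δ • e₁ : Fin (N + 1) → ℝ) 0) 0) • e₁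
      = ((transMatrix w)⁻¹)ᵀ *ᵥ (M *ᵥ a + α • C *ᵥ v + K *ᵥ x + (kn * max (w ⬝ᵥ x - δ) 0) • w)
        - δ • congrT w K *ᵥ e₁ := by
    simp only [mulVec_add, mulVec_sub, mulVec_smul, congrT_mulVec_transMatrix_mulVec hw,
      inv_transpose_transMatrix_mulVec hw, Pi.sub_apply, Pi.smul_apply,
      transMatrix_mulVec_apply_zero, he₁, smul_eq_mul, mul_one]
    module
  have hrhs : δ • ftilde w K + c • fttilde w f =
      ((transMatrix w)⁻¹)ᵀ *ᵥ (c • f) - δ • congrT w K *ᵥ e₁ := by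
    rw [ftilde, fttilde, mulVec_smul]
    module
  rw [hlhs, hrhs, sub_left_inj, (injective_inv_transpose_transMatrix_mulVec hw).eq_iff]

theorem eom_iff_transformed_eom_general {N : ℕ} (w : Fin (N + 1) → ℝ) (hw : w 0 ≠ 0)
    (M C K : Matrix (Fin (N + 1)) (Fin (N + 1)) ℝ) (f : Fin (N + 1) → ℝ)
    (α kn δ Ω : ℝ) (q q' q'' : ℝ → Fin (N + 1) → ℝ) :
    (∀ t : ℝ, M.mulVec (q'' t) + α • C.mulVec (q' t) + K.mulVec (q t)
        + (kn * max (w ⬝ᵥ q t - δ) 0) • w = Real.cos (Ω * t) • f)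
    ↔ (∀ t : ℝ,
        (congrT w M).mulVec ((transMatrix w).mulVec (q'' t))
        + α • (congrT w C).mulVec ((transMatrix w).mulVec (q' t))
        + (congrT w K).mulVec ((transMatrix w).mulVec (q t) - δ • e₁)
        + (kn * max (((transMatrix w).mulVec (q t) - δ • e₁ : Fin (N + 1) → ℝ) 0) 0) • e₁
        = δ • ftilde w K + Real.cos (Ω * t) • fttilde w f) :=
  forall_congr' fun t => eom_apply_iff_transformed hw M C K f (q t) (q' t) (q'' t) α kn δ _

/-- A twice-differentiable curve `q` satisfies the equations of motion
`M q̈ + α C q̇ + K q + k_n max(wᵀq − δ, 0) w = f cos(Ω t)` if and only if the transformed curve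
`q̃ := V q − δ e₁` satisfies the transformed equations of motion
`M̃ q̃̈ + α C̃ q̃̇ + K̃ q̃ + k_n max(e₁ᵀ q̃, 0) e₁ = f̃ δ + f̃_t cos(Ω t)`. -/
theorem eom_iff_transformed_eom {N : ℕ} (w : Fin (N + 1) → ℝ) (hw : w 0 ≠ 0)
    (M C K : Matrix (Fin (N + 1)) (Fin (N + 1)) ℝ) (f : Fin (N + 1) → ℝ)
    (α kn δ Ω : ℝ) (q q' q'' : ℝ → Fin (N + 1) → ℝ)
    (hq' : ∀ t, HasDerivAt q (q' t) t) (hq'' : ∀ t, HasDerivAt q' (q'' t) t) :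
    (∀ t : ℝ, M.mulVec (q'' t) + α • C.mulVec (q' t) + K.mulVec (q t)
        + (kn * max (w ⬝ᵥ q t - δ) 0) • w = Real.cos (Ω * t) • f)
    ↔ (∀ t : ℝ,
        (congrT w M).mulVec ((transMatrix w).mulVec (q'' t))
        + α • (congrT w C).mulVec ((transMatrix w).mulVec (q' t))
        + (congrT w K).mulVec ((transMatrix w).mulVec (q t) - δ • e₁)
        + (kn * max (((transMatrix w).mulVec (q t) - δ • e₁ : Fin (N + 1) → ℝ) 0) 0) • e₁
        = δ • ftilde w K + Real.cos (Ω * t) • fttilde w f) :=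
  eom_iff_transformed_eom_general w hw M C K f α kn δ Ω q q' q''
end
end

section
/- Saad's block-exponential identity: for every real n×n matrix B and every c ∈ ℝⁿ (viewed as an n×1 column), the exponential of the (n+1)×(n+1) block matrix [[B, c],[0, 0]] equals the block matrix [[exp(B), φ₁(B)c],[0, 1]]. -/
/-!
Since the last block row of `M = [[B, c], [0, 0]]` vanishes,
`M ^ (k + 1) = [[B ^ k, 0], [0, 0]] * M`. Summing the exponential series from its second term
therefore gives `exp M = 1 + [[φ₁(B), 0], [0, 0]] * M = [[1 + φ₁(B) B, φ₁(B) c], [0, 1]]`,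
and `1 + φ₁(B) B = exp B` is the exponential series of `B` with its first term split off.
-/

open Matrix

noncomputable section

/-- The phi-function `φ₁(B) := ∑_{k=0}^∞ B^k/(k+1)!` of a real square matrix `B`. -/
def phi1 {n : ℕ} (B : Matrix (Fin n) (Fin n) ℝ) : Matrix (Fin n) (Fin n) ℝ :=
  ∑' k : ℕ, ((k + 1).factorial : ℝ)⁻¹ • B ^ k

open NormedSpace Nat

section BanachAlgebra

variable {𝕂 𝔸 : Type*} [RCLike 𝕂] [NormedRing 𝔸] [NormedAlgebra 𝕂 𝔸] [CompleteSpace 𝔸]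

variable (𝕂) in
theorem summable_inv_factorial_succ_smul_pow (a : 𝔸) :
    Summable fun k : ℕ => ((k + 1)! : 𝕂)⁻¹ • a ^ k := by
  refine Summable.of_norm_bounded (norm_expSeries_summable' (𝕂 := 𝕂) a) fun k => ?_
  rw [norm_smul, norm_smul]
  gcongr
  rw [norm_inv, norm_inv, RCLike.norm_natCast, RCLike.norm_natCast]
  gcongr
  exact k.le_succ

variable (𝕂) in
theorem exp_eq_one_add_tsum_mul (a : 𝔸) :
    exp a = 1 + (∑' k : ℕ, ((k + 1)! : 𝕂)⁻¹ • a ^ k) * a := by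
  have htail : HasSum (fun k : ℕ => ((k + 1)! : 𝕂)⁻¹ • a ^ (k + 1))
      ((∑' k : ℕ, ((k + 1)! : 𝕂)⁻¹ • a ^ k) * a) := by
    simpa only [smul_mul_assoc, ← pow_succ] using
      (summable_inv_factorial_succ_smul_pow 𝕂 a).hasSum.mul_right a
  have h := (hasSum_nat_add_iff (f := fun k : ℕ => (k ! : 𝕂)⁻¹ • a ^ k) 1).mp htail
  refine (exp_series_hasSum_exp' (𝕂 := 𝕂) a).unique ?_
  simpa [add_comm] using h

end BanachAlgebra

namespace Matrix

variable {ι l m n o α : Type*}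

theorem _root_.HasSum.matrix_fromBlocks [AddCommMonoid α] [TopologicalSpace α]
    {A : ι → Matrix n l α} {B : ι → Matrix n m α} {C : ι → Matrix o l α} {D : ι → Matrix o m α}
    {a : Matrix n l α} {b : Matrix n m α} {c : Matrix o l α} {d : Matrix o m α}
    (hA : HasSum A a) (hB : HasSum B b) (hC : HasSum C c) (hD : HasSum D d) :
    HasSum (fun i => fromBlocks (A i) (B i) (C i) (D i)) (fromBlocks a b c d) := by
  refine Pi.hasSum.2 fun i => Pi.hasSum.2 fun j => ?_
  rcases i with i | i <;> rcases j with j | j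
  exacts [Pi.hasSum.1 (Pi.hasSum.1 hA i) j, Pi.hasSum.1 (Pi.hasSum.1 hB i) j,
    Pi.hasSum.1 (Pi.hasSum.1 hC i) j, Pi.hasSum.1 (Pi.hasSum.1 hD i) j]

theorem fromBlocks_zero_zero_pow_succ [Fintype m] [DecidableEq m] [Fintype o] [DecidableEq o]
    [Semiring α] (B : Matrix m m α) (C : Matrix m o α) (k : ℕ) :
    fromBlocks B C 0 (0 : Matrix o o α) ^ (k + 1)
      = fromBlocks (B ^ k) 0 0 0 * fromBlocks B C 0 0 := by
  induction k with
  | zero => simp [fromBlocks_multiply]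
  | succ k ih =>
    rw [pow_succ, ih, Matrix.mul_assoc]
    simp [fromBlocks_multiply, pow_succ, Matrix.mul_assoc]

variable {𝕂 : Type*} [RCLike 𝕂] [Fintype m] [DecidableEq m]

/- The matrix exponential is defined topologically; the operator norm is opened only inside
these proofs, so that the statements carry no choice of norm. -/

theorem summable_inv_factorial_succ_smul_pow (B : Matrix m m 𝕂) :
    Summable fun k : ℕ => ((k + 1)! : 𝕂)⁻¹ • B ^ k :=
  open scoped Norms.Operator in _root_.summable_inv_factorial_succ_smul_pow 𝕂 B

theorem hasSum_exp (A : Matrix m m 𝕂) : HasSum (fun k : ℕ => (k ! : 𝕂)⁻¹ • A ^ k) (exp A) :=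
  open scoped Norms.Operator in exp_series_hasSum_exp' A

theorem exp_eq_one_add_tsum_mul (B : Matrix m m 𝕂) :
    exp B = 1 + (∑' k : ℕ, ((k + 1)! : 𝕂)⁻¹ • B ^ k) * B :=
  open scoped Norms.Operator in _root_.exp_eq_one_add_tsum_mul 𝕂 B

variable [Fintype o] [DecidableEq o]

theorem exp_fromBlocks_zero_zero (B : Matrix m m 𝕂) (C : Matrix m o 𝕂) :
    exp (fromBlocks B C 0 0)
      = fromBlocks (exp B) ((∑' k : ℕ, ((k + 1)! : 𝕂)⁻¹ • B ^ k) * C) 0 (1 : Matrix o o 𝕂) := by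
  set M : Matrix (m ⊕ o) (m ⊕ o) 𝕂 := fromBlocks B C 0 0 with hM
  have htail : HasSum (fun k : ℕ => ((k + 1)! : 𝕂)⁻¹ • M ^ (k + 1))
      (fromBlocks (∑' k : ℕ, ((k + 1)! : 𝕂)⁻¹ • B ^ k) 0 0 0 * M) := by
    simp_rw [hM, fromBlocks_zero_zero_pow_succ, ← smul_mul_assoc, fromBlocks_smul, smul_zero]
    refine HasSum.mul_right _ ?_
    exact (summable_inv_factorial_succ_smul_pow B).hasSum.matrix_fromBlocks
      hasSum_zero hasSum_zero hasSum_zero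
  have hsum := (hasSum_nat_add_iff (f := fun k : ℕ => (k ! : 𝕂)⁻¹ • M ^ k) 1).mp htail
  rw [(hasSum_exp M).unique hsum, exp_eq_one_add_tsum_mul B]
  simp [M, fromBlocks_multiply, ← fromBlocks_one, fromBlocks_add, add_comm]

end Matrix

/-- Saad's block-exponential identity: for every real `n×n` matrix `B` and every `c ∈ ℝⁿ`
(viewed as an `n×1` column), `exp [[B, c],[0, 0]] = [[exp(B), φ₁(B)c],[0, 1]]`. -/
theorem saad_block_exponential {n : ℕ} (B : Matrix (Fin n) (Fin n) ℝ) (c : Fin n → ℝ) :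
    NormedSpace.exp (Matrix.fromBlocks B (Matrix.replicateCol (Fin 1) c) 0 0)
      = Matrix.fromBlocks (NormedSpace.exp B) (Matrix.replicateCol (Fin 1) ((phi1 B).mulVec c)) 0 (1 : Matrix (Fin 1) (Fin 1) ℝ) := by
  rw [Matrix.exp_fromBlocks_zero_zero, replicateCol_mulVec, phi1]
end
end

section
/- An invariant cone with μ = 1 yields a periodic orbit (nonlinear normal mode) of the homogeneous continuous piecewise linear system: let A⁻ ∈ ℝ^{n×n}, c ∈ ℝⁿ, A⁺ = A⁻ + c e₁ᵀ, and suppose ξ ∈ ℝⁿ and t⁻, t⁺ > 0 satisfy: e₁ᵀξ = 0; e₁ᵀ exp(sA⁻) ξ ≤ 0 for all s ∈ [0, t⁻]; setting η := exp(t⁻A⁻) ξ, e₁ᵀη = 0 and e₁ᵀ exp(sA⁺) η ≥ 0 for all s ∈ [0, t⁺]; and exp(t⁺A⁺) exp(t⁻A⁻) ξ = ξ. Then, with T := t⁻ + t⁺, there exists a T-periodic curve x : ℝ → ℝⁿ with x(0) = ξ that satisfies ẋ(t) = A⁻ x(t) + max(e₁ᵀ x(t), 0) c for all t ∈ ℝ.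 -/
/-!
On `[0, t⁻]` the orbit of `ξ` under `exp(s A⁻)` stays in `{x₁ ≤ 0}`, where the vector field is
`A⁻ x`, and on `[t⁻, t⁻ + t⁺]` the orbit of `η` under `exp(s A⁺)` stays in `{x₁ ≥ 0}`, where it is
`A⁺ x`. Both arcs are therefore solutions of the piecewise linear system; they meet at `η`, and the
concatenated arc returns to `ξ`, so its `T`-periodic extension is a global solution.
-/

open Matrix Set Function NormedSpace
open scoped Pointwise

section IntegralCurve

variable {E : Type*} [NormedAddCommGroup E] [NormedSpace ℝ E] {γ γ₁ γ₂ : ℝ → E}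
  {v : ℝ → E → E} {s : Set ℝ}

theorem IsIntegralCurveOn.congr (h : IsIntegralCurveOn γ v s) (hγ : EqOn γ₁ γ s) :
    IsIntegralCurveOn γ₁ v s := fun t ht => by
  simpa only [hγ ht] using (h t ht).congr hγ (hγ ht)

theorem IsIntegralCurveOn.congr_field {w : ℝ → E → E} (h : IsIntegralCurveOn γ v s)
    (hvw : ∀ t ∈ s, v t (γ t) = w t (γ t)) : IsIntegralCurveOn γ w s := fun t ht =>
  hvw t ht ▸ h t ht

theorem IsIntegralCurveOn.union_Icc {a b c : ℝ} (h₁ : IsIntegralCurveOn γ v (Icc a b))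
    (h₂ : IsIntegralCurveOn γ v (Icc b c)) (hab : a ≤ b) (hbc : b ≤ c) :
    IsIntegralCurveOn γ v (Icc a c) := by
  -- away from a closed interval the one-sided derivative condition holds vacuously
  have hderiv : ∀ u : Set ℝ, IsClosed u → IsIntegralCurveOn γ v u → ∀ t,
      HasDerivWithinAt γ (v t (γ t)) u t := fun u hu h t => by
    by_cases ht : t ∈ u
    · exact h t ht
    · exact HasFDerivWithinAt.of_notMem_closure (hu.closure_eq.symm ▸ ht)
  intro t _
  rw [← Icc_union_Icc_eq_Icc hab hbc]
  exact (hderiv _ isClosed_Icc h₁ t).union (hderiv _ isClosed_Icc h₂ t)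

theorem IsIntegralCurveOn.ite_Icc {a b c : ℝ} (h₁ : IsIntegralCurveOn γ₁ v (Icc a b))
    (h₂ : IsIntegralCurveOn γ₂ v (Icc b c)) (hb : γ₁ b = γ₂ b) (hab : a ≤ b) (hbc : b ≤ c) :
    IsIntegralCurveOn (fun t => if t ≤ b then γ₁ t else γ₂ t) v (Icc a c) := by
  refine (h₁.congr fun t ht => if_pos ht.2).union_Icc (h₂.congr fun t ht => ?_) hab hbc
  by_cases htb : t ≤ b
  · rw [if_pos htb, le_antisymm htb ht.1, hb]
  · exact if_neg htb

theorem isIntegralCurve_of_forall_int_isIntegralCurveOn {T : ℝ} (hT : 0 < T)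
    (h : ∀ k : ℤ, IsIntegralCurveOn γ v (Icc (k * T) (k * T + T))) :
    IsIntegralCurve γ v := by
  intro t
  set k := ⌊t / T⌋
  have hk : k * T ≤ t := by
    rw [← le_div_iff₀ hT]
    exact Int.floor_le _
  have hk' : t < k * T + T := by
    have := Int.lt_floor_add_one (t / T)
    rw [div_lt_iff₀ hT] at this
    linarith
  have hprev := h (k - 1)
  rw [Int.cast_sub, Int.cast_one, sub_one_mul, sub_add_cancel] at hprev
  have hcurve := hprev.union_Icc (h k) (by linarith) (by linarith)
  exact hcurve.isIntegralCurveAt (Icc_mem_nhds (by linarith) hk') |>.hasDerivAt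

end IntegralCurve

section PeriodicExtension

variable {α : Type*} {T : ℝ} (hT : 0 < T)

noncomputable def periodicExtension (γ : ℝ → α) (t : ℝ) : α :=
  γ (toIcoMod hT 0 t)

theorem periodicExtension_periodic (γ : ℝ → α) : Periodic (periodicExtension hT γ) T :=
  (toIcoMod_periodic hT 0).comp γ

theorem periodicExtension_eq_of_mem_Icc {γ : ℝ → α} (hγ : γ T = γ 0) {t : ℝ}
    (ht : t ∈ Icc 0 T) : periodicExtension hT γ t = γ t := by
  rcases ht.2.lt_or_eq with htT | htT
  · rw [periodicExtension, (toIcoMod_eq_self hT).2 ⟨ht.1, by simpa using htT⟩]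
  · have hT0 : toIcoMod hT 0 T = 0 := by simpa using toIcoMod_apply_right hT (0 : ℝ)
    rw [periodicExtension, htT, hT0, hγ]

theorem IsIntegralCurveOn.isIntegralCurve_periodicExtension {E : Type*} [NormedAddCommGroup E]
    [NormedSpace ℝ E] {γ : ℝ → E} {v : ℝ → E → E} (hγ : IsIntegralCurveOn γ v (Icc 0 T))
    (hv : Periodic v T) (hper : γ T = γ 0) : IsIntegralCurve (periodicExtension hT γ) v := by
  refine isIntegralCurve_of_forall_int_isIntegralCurveOn hT fun k => ?_
  have hshift := hγ.comp_sub (k * T)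
  rw [show v ∘ (· - k * T) = v from funext fun t => hv.sub_int_mul_eq k, vadd_Icc,
    add_zero] at hshift
  refine hshift.congr fun t ht => ?_
  rw [Function.comp_apply, ← (periodicExtension_periodic hT γ).sub_int_mul_eq k]
  exact periodicExtension_eq_of_mem_Icc hT hper ⟨by linarith [ht.1], by linarith [ht.2]⟩

end PeriodicExtension

section PiecewiseLinear

variable {ι : Type*} [Fintype ι]

theorem isIntegralCurve_exp_smul_mulVec [DecidableEq ι] (A : Matrix ι ι ℝ) (x₀ : ι → ℝ) :
    IsIntegralCurve (fun t => exp (t • A) *ᵥ x₀) (fun _ x => A *ᵥ x) := fun t => by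
  -- any submultiplicative norm makes `exp` differentiable; its value does not depend on the choice
  let _ : NormedRing (Matrix ι ι ℝ) := Matrix.linftyOpNormedRing
  let _ : NormedAlgebra ℝ (Matrix ι ι ℝ) := Matrix.linftyOpNormedAlgebra
  let L : Matrix ι ι ℝ →L[ℝ] ι → ℝ :=
    LinearMap.toContinuousLinearMap ((LinearMap.applyₗ x₀).comp Matrix.toLin'.toLinearMap)
  show HasDerivAt _ (A *ᵥ (exp (t • A) *ᵥ x₀)) t
  rw [mulVec_mulVec]
  exact L.hasFDerivAt.comp_hasDerivAt t (hasDerivAt_exp_smul_const' A t)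

noncomputable def pwlField (A : Matrix ι ι ℝ) (c : ι → ℝ) (i : ι) (x : ι → ℝ) : ι → ℝ :=
  A *ᵥ x + max (x i) 0 • c

variable (A : Matrix ι ι ℝ) (c : ι → ℝ) {i : ι}

theorem pwlField_of_nonpos {x : ι → ℝ} (hx : x i ≤ 0) : pwlField A c i x = A *ᵥ x := by
  rw [pwlField, max_eq_right hx, zero_smul, add_zero]

theorem pwlField_of_nonneg [DecidableEq ι] {x : ι → ℝ} (hx : 0 ≤ x i) :
    pwlField A c i x = (A + vecMulVec c (Pi.single i 1)) *ᵥ x := by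
  rw [pwlField, max_eq_left hx, add_mulVec, vecMulVec_mulVec, single_one_dotProduct,
    op_smul_eq_smul]

variable [DecidableEq ι] {x₀ : ι → ℝ} {s : Set ℝ}

theorem isIntegralCurveOn_pwlField_of_nonpos (h : ∀ t ∈ s, (exp (t • A) *ᵥ x₀) i ≤ 0) :
    IsIntegralCurveOn (fun t => exp (t • A) *ᵥ x₀) (fun _ => pwlField A c i) s :=
  ((isIntegralCurve_exp_smul_mulVec A x₀).isIntegralCurveOn s).congr_field fun t ht =>
    (pwlField_of_nonpos A c (h t ht)).symm

theorem isIntegralCurveOn_pwlField_of_nonneg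
    (h : ∀ t ∈ s, 0 ≤ (exp (t • (A + vecMulVec c (Pi.single i 1))) *ᵥ x₀) i) :
    IsIntegralCurveOn (fun t => exp (t • (A + vecMulVec c (Pi.single i 1))) *ᵥ x₀)
      (fun _ => pwlField A c i) s :=
  ((isIntegralCurve_exp_smul_mulVec _ x₀).isIntegralCurveOn s).congr_field fun t ht =>
    (pwlField_of_nonneg A c (h t ht)).symm

end PiecewiseLinear

theorem invariant_cone_yields_periodic_orbit_general {n : ℕ}
    (Am : Matrix (Fin (n + 1)) (Fin (n + 1)) ℝ) (c ξ : Fin (n + 1) → ℝ) (tm tp : ℝ)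
    (htm : 0 < tm) (htp : 0 < tp)
    (hminus : ∀ s ∈ Set.Icc (0 : ℝ) tm, ((NormedSpace.exp (s • Am)).mulVec ξ) 0 ≤ 0)
    (hplus : ∀ s ∈ Set.Icc (0 : ℝ) tp,
      ((NormedSpace.exp (s • (Am + Matrix.vecMulVec c (Pi.single 0 1)))).mulVec
        ((NormedSpace.exp (tm • Am)).mulVec ξ)) 0 ≥ 0)
    (hret : (NormedSpace.exp (tp • (Am + Matrix.vecMulVec c (Pi.single 0 1)))).mulVec
        ((NormedSpace.exp (tm • Am)).mulVec ξ) = ξ) :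
    ∃ x : ℝ → Fin (n + 1) → ℝ,
      x 0 = ξ
      ∧ (∀ t : ℝ, x (t + (tm + tp)) = x t)
      ∧ (∀ t : ℝ, HasDerivAt x (Am.mulVec (x t) + max (x t 0) 0 • c) t) := by
  have hT : 0 < tm + tp := by positivity
  have hplus' := (isIntegralCurveOn_pwlField_of_nonneg Am c hplus).comp_sub tm
  rw [vadd_Icc, add_zero] at hplus'
  set γ : ℝ → Fin (n + 1) → ℝ := fun t => if t ≤ tm then exp (t • Am) *ᵥ ξ
    else exp ((t - tm) • (Am + vecMulVec c (Pi.single 0 1))) *ᵥ exp (tm • Am) *ᵥ ξ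
  have hγ : IsIntegralCurveOn γ (fun _ => pwlField Am c 0) (Icc 0 (tm + tp)) :=
    (isIntegralCurveOn_pwlField_of_nonpos Am c hminus).ite_Icc hplus' (by simp) htm.le
      (by linarith)
  have hper : γ (tm + tp) = γ 0 := by
    simp only [γ, if_neg (not_le.2 (lt_add_of_pos_right tm htp)), if_pos htm.le,
      add_sub_cancel_left, hret, zero_smul, exp_zero, one_mulVec]
  refine ⟨periodicExtension hT γ, ?_, periodicExtension_periodic hT γ,
    hγ.isIntegralCurve_periodicExtension hT (fun _ => rfl) hper⟩
  rw [periodicExtension_eq_of_mem_Icc hT hper ⟨le_rfl, hT.le⟩]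
  simp [γ, htm.le]

/-- An invariant cone with `μ = 1` yields a periodic orbit (nonlinear normal mode) of the
homogeneous continuous piecewise linear system `ẋ = A⁻x + max(x₁, 0) c` with
`A⁺ = A⁻ + c e₁ᵀ`: if `ξ` lies on the switching hyperplane, the `⊖`-flow from `ξ` stays in
`{x₁ ≤ 0}` up to time `t⁻` where it reaches `η := exp(t⁻A⁻) ξ` on the hyperplane, the `⊕`-flow
from `η` stays in `{x₁ ≥ 0}` up to time `t⁺`, and `exp(t⁺A⁺) exp(t⁻A⁻) ξ = ξ`, then there is a
`T := t⁻ + t⁺`-periodic solution `x` of the piecewise linear system with `x(0) = ξ`. -/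
theorem invariant_cone_yields_periodic_orbit {n : ℕ}
    (Am : Matrix (Fin (n + 1)) (Fin (n + 1)) ℝ) (c ξ : Fin (n + 1) → ℝ) (tm tp : ℝ)
    (htm : 0 < tm) (htp : 0 < tp)
    (hξ0 : ξ 0 = 0)
    (hminus : ∀ s ∈ Set.Icc (0 : ℝ) tm, ((NormedSpace.exp (s • Am)).mulVec ξ) 0 ≤ 0)
    (hη0 : ((NormedSpace.exp (tm • Am)).mulVec ξ) 0 = 0)
    (hplus : ∀ s ∈ Set.Icc (0 : ℝ) tp,
      ((NormedSpace.exp (s • (Am + Matrix.vecMulVec c (Pi.single 0 1)))).mulVec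
        ((NormedSpace.exp (tm • Am)).mulVec ξ)) 0 ≥ 0)
    (hret : (NormedSpace.exp (tp • (Am + Matrix.vecMulVec c (Pi.single 0 1)))).mulVec
        ((NormedSpace.exp (tm • Am)).mulVec ξ) = ξ) :
    ∃ x : ℝ → Fin (n + 1) → ℝ,
      x 0 = ξ
      ∧ (∀ t : ℝ, x (t + (tm + tp)) = x t)
      ∧ (∀ t : ℝ, HasDerivAt x (Am.mulVec (x t) + max (x t 0) 0 • c) t) :=
  invariant_cone_yields_periodic_orbit_general Am c ξ tm tp htm htp hminus hplus hret
end
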